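/- arXiv:0804.0646 — 3 statements merged into one kernel-verified Lean document; each statement's English description precedes it below -/
import Mathlib

section
/- Let T = {γ ∈ ℝ^n : γ_i < 0 for all i, Σ_{i=1}^n γ_i > −1}, let f(γ) = ½ Σ_{i=1}^n γ_i log(−γ_i) − ½ (1 + Σ_{j=1}^n γ_j) log(1 + Σ_{j=1}^n γ_j), and let F_j(r) = r_j²/(1 + Σ_{i=1}^n r_i²). Then the following two subsets of ℝ^n × ℝ^n are equal: {(∇f(γ), γ) : γ ∈ T} = {((log r_1, …, log r_n), −F(r)) : r ∈ (ℝ_{>0})^n}. (That is, in coordinates (y, γ) with y = log r, the Lagrangian L(O(−1), h_{−1}) = {(r, −F(r))} is exactly the graph Γ_{df} of the exact 1-form df over T.) -/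
open scoped BigOperators

/-- The open cell `T = {γ ∈ ℝⁿ : γᵢ < 0, ∑ γᵢ > −1}`. -/
def openCellT (n : ℕ) : Set (Fin n → ℝ) := {γ | (∀ i, γ i < 0) ∧ -1 < ∑ i, γ i}

/-- The potential `f` of the T-dual Lagrangian `L(O(−1), h_{−1})`. -/
noncomputable def potentialF (n : ℕ) (γ : Fin n → ℝ) : ℝ :=
  (1 / 2) * ∑ i, γ i * Real.log (-γ i)
    - (1 / 2) * (1 + ∑ j, γ j) * Real.log (1 + ∑ j, γ j)

/-- The moment map image of the torus orbit `L(r)`: `F_j(r) = r_j² / (1 + ∑ r_i²)`. -/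
noncomputable def momentOfOrbit (n : ℕ) (r : Fin n → ℝ) : Fin n → ℝ :=
  fun j => r j ^ 2 / (1 + ∑ i, r i ^ 2)

/-!
Since `Real.log` is even, `f(γ) = ½ (∑ γᵢ log γᵢ − S log S)` with `S = 1 + ∑ γⱼ`, so
`∂ᵢ f(γ) = ½ (log (−γᵢ) − log S)`. The map `r ↦ −F(r)` sends the positive orthant onto `T`, with
inverse `γ ↦ (√(−γᵢ / S))ᵢ`, and along it `S = (1 + ∑ rⱼ²)⁻¹`; hence
`∂ᵢ f(−F(r)) = ½ log rᵢ² = log rᵢ`.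
-/

open Real ContinuousLinearMap

section Potential

variable {n : ℕ} {γ : Fin n → ℝ}

theorem potentialF_eq : potentialF n = fun γ =>
    (∑ i, γ i * log (γ i) - (1 + ∑ j, γ j) * log (1 + ∑ j, γ j)) / 2 := by
  funext γ
  simp only [potentialF, log_neg_eq_log]
  ring

theorem hasFDerivAt_potentialF (hγ : ∀ i, γ i ≠ 0) (hS : 1 + ∑ j, γ j ≠ 0) :
    HasFDerivAt (potentialF n)
      ((2⁻¹ : ℝ) • (∑ i, (log (γ i) + 1) • proj i
        - (log (1 + ∑ j, γ j) + 1) • ∑ j, proj j) : (Fin n → ℝ) →L[ℝ] ℝ) γ := by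
  have hEntropy : HasFDerivAt (fun γ : Fin n → ℝ => ∑ i, γ i * log (γ i))
      (∑ i, (log (γ i) + 1) • proj i : (Fin n → ℝ) →L[ℝ] ℝ) γ :=
    HasFDerivAt.fun_sum fun i _ =>
      (hasDerivAt_mul_log (hγ i)).comp_hasFDerivAt (f := fun γ : Fin n → ℝ => γ i) γ
        (hasFDerivAt_apply i γ)
  have hTotal : HasFDerivAt (fun γ : Fin n → ℝ => 1 + ∑ j, γ j)
      (∑ j, proj j : (Fin n → ℝ) →L[ℝ] ℝ) γ :=
    (HasFDerivAt.fun_sum fun j _ => hasFDerivAt_apply j γ).const_add 1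
  rw [potentialF_eq]
  simpa only [div_eq_inv_mul, Function.comp_def] using
    ((hEntropy.fun_sub ((hasDerivAt_mul_log hS).comp_hasFDerivAt γ hTotal)).const_mul (2⁻¹ : ℝ))

theorem fderiv_potentialF_single (hγ : ∀ i, γ i ≠ 0) (hS : 1 + ∑ j, γ j ≠ 0) (i : Fin n) :
    fderiv ℝ (potentialF n) γ (Pi.single i 1) = (log (γ i) - log (1 + ∑ j, γ j)) / 2 := by
  rw [(hasFDerivAt_potentialF hγ hS).fderiv]
  simp only [smul_apply, sub_apply, sum_apply, proj_apply, Pi.single_apply, smul_eq_mul, mul_ite,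
    mul_one, mul_zero, Finset.sum_ite_eq', Finset.mem_univ, if_true, add_sub_add_right_eq_sub]
  ring

end Potential

section Moment

variable {n : ℕ} {r : Fin n → ℝ}

theorem one_add_sum_neg_momentOfOrbit :
    1 + ∑ j, -momentOfOrbit n r j = (1 + ∑ i, r i ^ 2)⁻¹ := by
  simp only [momentOfOrbit, Finset.sum_neg_distrib, ← Finset.sum_div]
  field_simp
  ring

theorem momentOfOrbit_pos (hr : ∀ i, r i ≠ 0) (j : Fin n) : 0 < momentOfOrbit n r j := by
  have := hr j
  unfold momentOfOrbit
  positivity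

theorem neg_momentOfOrbit_mem_openCellT (hr : ∀ i, r i ≠ 0) : -momentOfOrbit n r ∈ openCellT n := by
  refine ⟨fun j => neg_neg_of_pos (momentOfOrbit_pos hr j), ?_⟩
  have : 0 < 1 + ∑ j, -momentOfOrbit n r j := by
    rw [one_add_sum_neg_momentOfOrbit]
    positivity
  simp only [Pi.neg_apply]
  linarith

theorem fderiv_potentialF_neg_momentOfOrbit (hr : ∀ i, r i ≠ 0) (i : Fin n) :
    fderiv ℝ (potentialF n) (-momentOfOrbit n r) (Pi.single i 1) = log (r i) := by
  have hQ : 0 < 1 + ∑ i, r i ^ 2 := by positivity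
  rw [fderiv_potentialF_single (fun j => (neg_momentOfOrbit_mem_openCellT hr).1 j |>.ne)
    (by simp only [Pi.neg_apply, one_add_sum_neg_momentOfOrbit]; positivity)]
  simp only [Pi.neg_apply, one_add_sum_neg_momentOfOrbit, log_inv, log_neg_eq_log]
  rw [momentOfOrbit, log_div (pow_ne_zero 2 (hr i)) hQ.ne', log_pow]
  push_cast
  ring

theorem exists_neg_momentOfOrbit_eq {γ : Fin n → ℝ} (hγ : γ ∈ openCellT n) :
    ∃ r : Fin n → ℝ, (∀ i, 0 < r i) ∧ -momentOfOrbit n r = γ := by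
  obtain ⟨hneg, hsum⟩ := hγ
  set S := ∑ j, γ j
  have hS : 0 < 1 + S := by linarith
  have hpos : ∀ i, 0 < -γ i / (1 + S) := fun i => div_pos (neg_pos.2 (hneg i)) hS
  have hsq : ∀ i, √(-γ i / (1 + S)) ^ 2 = -γ i / (1 + S) := fun i => sq_sqrt (hpos i).le
  have hQ : 1 + ∑ i, √(-γ i / (1 + S)) ^ 2 = (1 + S)⁻¹ := by
    simp only [hsq, ← Finset.sum_div, Finset.sum_neg_distrib]
    field_simp
    ring
  refine ⟨fun i => √(-γ i / (1 + S)), fun i => sqrt_pos.2 (hpos i), funext fun j => ?_⟩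
  simp only [Pi.neg_apply, momentOfOrbit]
  rw [hQ, hsq]
  field_simp

end Moment

theorem stmt_6_general (n : ℕ) :
    {p : (Fin n → ℝ) × (Fin n → ℝ) | ∃ γ ∈ openCellT n,
        p = (fun i => fderiv ℝ (potentialF n) γ (Pi.single i 1), γ)} =
      {p : (Fin n → ℝ) × (Fin n → ℝ) | ∃ r : Fin n → ℝ, (∀ i, 0 < r i) ∧
        p = (fun i => Real.log (r i), fun j => -(momentOfOrbit n r j))} := by
  ext p
  constructor
  · rintro ⟨γ, hγ, rfl⟩
    obtain ⟨r, hr, rfl⟩ := exists_neg_momentOfOrbit_eq hγ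
    refine ⟨r, hr, ?_⟩
    rw [funext (fderiv_potentialF_neg_momentOfOrbit fun i => (hr i).ne')]
    rfl
  · rintro ⟨r, hr, rfl⟩
    have hr₀ : ∀ i, r i ≠ 0 := fun i => (hr i).ne'
    refine ⟨-momentOfOrbit n r, neg_momentOfOrbit_mem_openCellT hr₀, ?_⟩
    rw [funext (fderiv_potentialF_neg_momentOfOrbit hr₀)]
    rfl

theorem stmt_6 (n : ℕ) (hn : 1 ≤ n) :
    {p : (Fin n → ℝ) × (Fin n → ℝ) | ∃ γ ∈ openCellT n,
        p = (fun i => fderiv ℝ (potentialF n) γ (Pi.single i 1), γ)} =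
      {p : (Fin n → ℝ) × (Fin n → ℝ) | ∃ r : Fin n → ℝ, (∀ i, 0 < r i) ∧
        p = (fun i => Real.log (r i), fun j => -(momentOfOrbit n r j))} :=
  stmt_6_general n
end

section
/- For a ∈ ℝ^n and k ∈ ℝ define the open set U^a(k) = {γ ∈ ℝ^n : γ_l < a_l for all l, and Σ_{l=1}^n γ_l > k + Σ_{l=1}^n a_l}. Then: (i) U^a(k) is nonempty if and only if k < 0; and (ii) for any i ∈ ℝ, any j < 0 and any b ∈ ℝ^n, one has U^b(j) ⊆ U^0(i) if and only if b_l ≤ 0 for all l and Σ_{l=1}^n b_l ≥ i − j. -/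
open scoped BigOperators

/-!
Every point of `U^a(k)` lies below `a` coordinatewise, so its coordinate sum is at most `∑ a`,
forcing `k < 0`. Conversely the diagonal translates `a + t` with `t < 0` and `k < n t` lie in
`U^a(k)`; testing a containment `U^b(j) ⊆ U^a(i)` on the translates `b + t` with `t` close to `0`
gives `b ≤ a`, and with `n t` close to `j` gives `i + ∑ a ≤ j + ∑ b`.
-/

/-- The open cell `U^a(k) = {γ ∈ ℝⁿ : γ_l < a_l, ∑ γ_l > k + ∑ a_l}`. -/
def openCellU (n : ℕ) (a : Fin n → ℝ) (k : ℝ) : Set (Fin n → ℝ) :=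
  {γ | (∀ l, γ l < a l) ∧ k + ∑ l, a l < ∑ l, γ l}

namespace OpenCellU

variable {n : ℕ}

lemma sum_add_const (a : Fin n → ℝ) (t : ℝ) : ∑ l, (a l + t) = ∑ l, a l + n * t := by
  simp [Finset.sum_add_distrib]

theorem nonempty_iff (a : Fin n → ℝ) (k : ℝ) : (openCellU n a k).Nonempty ↔ k < 0 := by
  constructor
  · rintro ⟨γ, hlt, hsum⟩
    have : ∑ l, γ l ≤ ∑ l, a l := Finset.sum_le_sum fun l _ => (hlt l).le
    linarith
  · intro hk
    have hpos : (0 : ℝ) < n + 1 := by positivity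
    refine ⟨fun l => a l + k / (n + 1), fun l => by simp [div_neg_of_neg_of_pos hk hpos], ?_⟩
    have : k < n * (k / (n + 1)) := by
      rw [mul_div_assoc', lt_div_iff₀ hpos]
      linarith
    rw [sum_add_const]
    linarith

lemma add_const_mem_iff [NeZero n] (a : Fin n → ℝ) (k t : ℝ) :
    (fun l => a l + t) ∈ openCellU n a k ↔ t < 0 ∧ k < n * t := by
  simp only [openCellU, Set.mem_ofPred_eq, add_lt_iff_neg_left, forall_const, sum_add_const]
  constructor <;> rintro ⟨h1, h2⟩ <;> exact ⟨h1, by linarith⟩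

theorem subset_iff [NeZero n] {a b : Fin n → ℝ} {i j : ℝ} (hj : j < 0) :
    openCellU n b j ⊆ openCellU n a i ↔ b ≤ a ∧ i + ∑ l, a l ≤ j + ∑ l, b l := by
  have hn : (0 : ℝ) < n := by exact_mod_cast Nat.pos_of_neZero n
  constructor
  · intro hsub
    constructor
    · intro m
      by_contra! hm
      obtain ⟨t, hlt, ht⟩ := exists_between (max_lt (sub_neg.2 hm) (div_neg_of_neg_of_pos hj hn))
      rw [max_lt_iff, div_lt_iff₀' hn] at hlt
      have := (hsub ((add_const_mem_iff b j t).2 ⟨ht, hlt.2⟩)).1 m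
      linarith [hlt.1]
    · by_contra! hsum
      obtain ⟨s, hjs, hs⟩ := exists_between (lt_min hj (by linarith : j < i + ∑ l, a l - ∑ l, b l))
      rw [lt_min_iff] at hs
      have hmem := (add_const_mem_iff b j (s / n)).2
        ⟨div_neg_of_neg_of_pos hs.1 hn, by rwa [mul_div_cancel₀ _ hn.ne']⟩
      have := (hsub hmem).2
      rw [sum_add_const, mul_div_cancel₀ _ hn.ne'] at this
      linarith [hs.2]
  · rintro ⟨hba, hsum⟩ γ ⟨hγ, hγsum⟩
    exact ⟨fun l => (hγ l).trans_le (hba l), by linarith⟩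

end OpenCellU

theorem stmt_11 (n : ℕ) (hn : 1 ≤ n) :
    -- (i) nonemptiness
    (∀ (a : Fin n → ℝ) (k : ℝ), (openCellU n a k).Nonempty ↔ k < 0) ∧
    -- (ii) containment criterion
    (∀ (i j : ℝ), j < 0 → ∀ b : Fin n → ℝ,
      (openCellU n b j ⊆ openCellU n 0 i ↔ (∀ l, b l ≤ 0) ∧ i - j ≤ ∑ l, b l)) := by
  have : NeZero n := ⟨by omega⟩
  refine ⟨OpenCellU.nonempty_iff, fun i j hj b => ?_⟩
  rw [OpenCellU.subset_iff hj, Pi.le_def]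
  simp only [Pi.zero_apply, Finset.sum_const_zero, add_zero]
  constructor <;> rintro ⟨hb, hs⟩ <;> exact ⟨hb, by linarith⟩
end

section
/- Let n ≥ 1 and let i ≤ j ≤ k be integers. Define S_n(m) = {b ∈ ℤ^n : b_l ≤ 0 for all l, Σ b_l ≥ m} and, for i ≤ j, the map ν_{i,j}(b) = (j − i + Σ_{l=1}^n b_l, −b_1, …, −b_n) ∈ ℤ^{n+1}. Then: (i) ν_{i,j} is a bijection from S_n(i−j) onto {c ∈ ℕ^{n+1} : Σ_{l=0}^n c_l = j − i}; and (ii) for all b ∈ S_n(i−j) and c ∈ S_n(j−k), one has b + c ∈ S_n(i−k) and ν_{i,k}(b + c) = ν_{i,j}(b) + ν_{j,k}(c). Consequently, under the identification of c ∈ ℕ^{n+1} with the monomial x_0^{c_0} x_1^{c_1} ⋯ x_n^{c_n}, composition of the generators e^b_{i,j} corresponds to multiplication of the monomials x^b_{i,j} = x_0^{j−i+Σb_l} x_1^{−b_1} ⋯ x_n^{−b_n}: x^c_{j,k} · x^b_{i,j} = x^{b+c}_{i,k} in ℂ[x_0, …, x_n]. -/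
open scoped BigOperators

/-- `S_n(m) = {b ∈ ℤⁿ : b_l ≤ 0 for all l, ∑ b_l ≥ m}`. -/
def latticeS (n : ℕ) (m : ℤ) : Set (Fin n → ℤ) :=
  {b | (∀ l, b l ≤ 0) ∧ m ≤ ∑ l, b l}

/-- `ν_{i,j}(b) = (j − i + ∑ b_l, −b₁, …, −bₙ) ∈ ℤ^{n+1}`. -/
def nuMap (n : ℕ) (i j : ℤ) (b : Fin n → ℤ) : Fin (n + 1) → ℤ :=
  Fin.cons (j - i + ∑ l, b l) (fun l => -b l)

section

variable {n : ℕ}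

lemma add_mem_latticeS {m m' : ℤ} {b c : Fin n → ℤ} (hb : b ∈ latticeS n m)
    (hc : c ∈ latticeS n m') : b + c ∈ latticeS n (m + m') := by
  refine ⟨fun l => add_nonpos (hb.1 l) (hc.1 l), ?_⟩
  simp only [Pi.add_apply, Finset.sum_add_distrib]
  exact add_le_add hb.2 hc.2

lemma neg_tail_mem_latticeS {i j : ℤ} {c : Fin (n + 1) → ℤ} (hc : ∀ l, 0 ≤ c l)
    (hsum : ∑ l, c l = j - i) : (fun l => -c l.succ) ∈ latticeS n (i - j) := by
  rw [Fin.sum_univ_succ] at hsum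
  refine ⟨fun l => neg_nonpos.mpr (hc l.succ), ?_⟩
  simp only [Finset.sum_neg_distrib]
  linarith [hc 0]

lemma nuMap_nonneg {i j : ℤ} {b : Fin n → ℤ} (hb : b ∈ latticeS n (i - j)) (l : Fin (n + 1)) :
    0 ≤ nuMap n i j b l := by
  cases l using Fin.cases with
  | zero => simp only [nuMap, Fin.cons_zero]; linarith [hb.2]
  | succ l => simpa only [nuMap, Fin.cons_succ, neg_nonneg] using hb.1 l

lemma sum_nuMap (i j : ℤ) (b : Fin n → ℤ) : ∑ l, nuMap n i j b l = j - i := by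
  simp [nuMap, Fin.sum_cons, Finset.sum_neg_distrib]

lemma nuMap_injective (i j : ℤ) : Function.Injective (nuMap n i j) := fun b b' h =>
  funext fun l => by simpa [nuMap] using congrFun h l.succ

lemma nuMap_neg_tail {i j : ℤ} {c : Fin (n + 1) → ℤ} (hsum : ∑ l, c l = j - i) :
    nuMap n i j (fun l => -c l.succ) = c := by
  rw [Fin.sum_univ_succ] at hsum
  funext l
  cases l using Fin.cases with
  | zero => simp only [nuMap, Fin.cons_zero, neg_neg, Finset.sum_neg_distrib]; linarith
  | succ l => simp [nuMap]

lemma bijOn_nuMap (i j : ℤ) :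
    Set.BijOn (nuMap n i j) (latticeS n (i - j))
      {c : Fin (n + 1) → ℤ | (∀ l, 0 ≤ c l) ∧ ∑ l, c l = j - i} :=
  ⟨fun _ hb => ⟨nuMap_nonneg hb, sum_nuMap i j _⟩,
    (nuMap_injective i j).injOn,
    fun _ hc => ⟨_, neg_tail_mem_latticeS hc.1 hc.2, nuMap_neg_tail hc.2⟩⟩

lemma nuMap_add (i j k : ℤ) (b c : Fin n → ℤ) :
    nuMap n i k (b + c) = nuMap n i j b + nuMap n j k c := by
  funext l
  cases l using Fin.cases with
  | zero => simp only [nuMap, Fin.cons_zero, Pi.add_apply, Finset.sum_add_distrib]; ring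
  | succ l => simp only [nuMap, Fin.cons_succ, Pi.add_apply]; ring

end

lemma prod_pow_toNat_mul_prod_pow_toNat {ι M : Type*} [Fintype ι] [CommMonoid M] (x : ι → M)
    {f g : ι → ℤ} (hf : ∀ l, 0 ≤ f l) (hg : ∀ l, 0 ≤ g l) :
    (∏ l, x l ^ (f l).toNat) * ∏ l, x l ^ (g l).toNat = ∏ l, x l ^ ((f + g) l).toNat := by
  rw [← Finset.prod_mul_distrib]
  refine Finset.prod_congr rfl fun l _ => ?_
  rw [← pow_add, Pi.add_apply, Int.toNat_add (hf l) (hg l)]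

open MvPolynomial in
theorem stmt_13_general (n : ℕ) (i j k : ℤ) :
    -- (i) `ν_{i,j}` is a bijection onto the monomial exponents of degree `j − i`
    Set.BijOn (nuMap n i j) (latticeS n (i - j))
      {c : Fin (n + 1) → ℤ | (∀ l, 0 ≤ c l) ∧ ∑ l, c l = j - i} ∧
    -- (ii) additivity, and multiplicativity of the corresponding monomials
    (∀ b ∈ latticeS n (i - j), ∀ c ∈ latticeS n (j - k),
      b + c ∈ latticeS n (i - k) ∧
      nuMap n i k (b + c) = nuMap n i j b + nuMap n j k c ∧
      (∏ l, (X l : MvPolynomial (Fin (n + 1)) ℂ) ^ (nuMap n j k c l).toNat) *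
          (∏ l, (X l : MvPolynomial (Fin (n + 1)) ℂ) ^ (nuMap n i j b l).toNat) =
        ∏ l, (X l : MvPolynomial (Fin (n + 1)) ℂ) ^ (nuMap n i k (b + c) l).toNat) := by
  refine ⟨bijOn_nuMap i j, fun b hb c hc => ⟨?_, nuMap_add i j k b c, ?_⟩⟩
  · simpa using add_mem_latticeS hb hc
  · rw [mul_comm, nuMap_add i j k b c]
    exact prod_pow_toNat_mul_prod_pow_toNat _ (nuMap_nonneg hb) (nuMap_nonneg hc)

open MvPolynomial in
theorem stmt_13 (n : ℕ) (hn : 1 ≤ n) (i j k : ℤ) (hij : i ≤ j) (hjk : j ≤ k) :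
    -- (i) `ν_{i,j}` is a bijection onto the monomial exponents of degree `j − i`
    Set.BijOn (nuMap n i j) (latticeS n (i - j))
      {c : Fin (n + 1) → ℤ | (∀ l, 0 ≤ c l) ∧ ∑ l, c l = j - i} ∧
    -- (ii) additivity, and multiplicativity of the corresponding monomials
    (∀ b ∈ latticeS n (i - j), ∀ c ∈ latticeS n (j - k),
      b + c ∈ latticeS n (i - k) ∧
      nuMap n i k (b + c) = nuMap n i j b + nuMap n j k c ∧
      (∏ l, (X l : MvPolynomial (Fin (n + 1)) ℂ) ^ (nuMap n j k c l).toNat) *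
          (∏ l, (X l : MvPolynomial (Fin (n + 1)) ℂ) ^ (nuMap n i j b l).toNat) =
        ∏ l, (X l : MvPolynomial (Fin (n + 1)) ℂ) ^ (nuMap n i k (b + c) l).toNat) :=
  stmt_13_general n i j k
end
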